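/- arXiv:1807.02809 — 4 statements merged into one kernel-verified Lean document; each statement's English description precedes it below -/
import Mathlib

section
/- Let (H, μ) be a probability space with measurable maps π_L, π_R : H → H such that (π_L, π_R) pushes μ forward to μ × μ. Then any map φ : H → H of the form φ(σ) = c(p₁(σ), ..., pₙ(σ)) where p₁,...,pₙ are distinct compositions of π_L and π_R forming a non-duplicating sequence of paths (no path is a suffix of another), and c reassembles them via a measure-preserving pairing, is measure-preserving: ∫ g(φ(σ)) dμ(σ) = ∫ g(σ) dμ(σ) for all measurable g : H → [0,∞]. -/
open MeasureTheory

namespace EntropyShuffle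

variable {H : Type*}

/-- A path is a list of directions (`true` = L, `false` = R), interpreted as a
composition of projections: `[d₁, …, dₙ](σ) = (π_{d₁} ∘ ⋯ ∘ π_{dₙ})(σ)`. -/
def pathEval (πL πR : H → H) : List Bool → H → H
  | [], σ => σ
  | d :: p, σ => (if d then πL else πR) (pathEval πL πR p σ)

/-- Finite shuffling functions: either a path, or a pairing of two FSFs. -/
inductive FSF where
  | path : List Bool → FSF
  | pair : FSF → FSF → FSF

/-- Evaluation of an FSF, given projections and a pairing function `c`. -/
def FSF.eval (πL πR : H → H) (c : H → H → H) : FSF → H → H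
  | .path p, σ => pathEval πL πR p σ
  | .pair f g, σ => c (f.eval πL πR c σ) (g.eval πL πR c σ)

/-- The sequence of paths appearing in an FSF. -/
def FSF.paths : FSF → List (List Bool)
  | .path p => [p]
  | .pair f g => f.paths ++ g.paths

/-- An FSF is non-duplicating if no path in its sequence of paths is a
suffix of another. -/
def FSF.NonDuplicating (φ : FSF) : Prop :=
  List.Pairwise (fun p q => ¬ p <:+ q ∧ ¬ q <:+ p) φ.paths

/-!
The paths of a non-duplicating FSF, evaluated at a μ-random σ, are independent with law μ.
Indeed, group the paths by the projection they apply first: the first group is a function of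
`πL σ`, the second of `πR σ`, and these are independent with law μ; stripping that projection
keeps each group suffix-free, so induction on the path length applies. The FSF then reassembles
its leaves bottom-up: the two subtrees at a node read disjoint sets of leaves, so they are
independent with law μ, and `c` pushes `μ ⊗ μ` forward to μ because it inverts
`σ ↦ (πL σ, πR σ)`.
-/

open ProbabilityTheory

lemma pathEval_append (πL πR : H → H) (p q : List Bool) (σ : H) :
    pathEval πL πR (p ++ q) σ = pathEval πL πR p (pathEval πL πR q σ) := by
  induction p with
  | nil => rfl
  | cons d p ih => simp only [List.cons_append, pathEval, ih]

lemma pathEval_of_getLast?_eq_some (πL πR : H → H) {p : List Bool} {d : Bool}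
    (h : p.getLast? = some d) (σ : H) :
    pathEval πL πR p σ = pathEval πL πR p.dropLast ((if d then πL else πR) σ) := by
  obtain ⟨q, rfl⟩ := List.getLast?_eq_some_iff.1 h
  rw [pathEval_append, List.dropLast_concat]
  rfl

section SuffixFree

variable {ι : Type*} {ℓ : ι → List Bool} {S : Finset ι}

lemma eq_singleton_of_eq_nil (hS : (S : Set ι).Pairwise (fun i j => ¬ ℓ i <:+ ℓ j)) {i : ι}
    (hi : i ∈ S) (hnil : ℓ i = []) : S = {i} :=
  Finset.eq_singleton_iff_unique_mem.2 ⟨hi, fun j hj => by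
    by_contra hji
    exact hS hi hj (Ne.symm hji) (hnil ▸ List.nil_suffix)⟩

lemma pairwise_dropLast_filter (hS : (S : Set ι).Pairwise (fun i j => ¬ ℓ i <:+ ℓ j))
    (d : Bool) :
    (S.filter fun i => (ℓ i).getLast? = some d : Set ι).Pairwise
      (fun i j => ¬ (ℓ i).dropLast <:+ (ℓ j).dropLast) := by
  intro i hi j hj hij hsuf
  simp only [Finset.coe_filter, Set.mem_ofPred_eq] at hi hj
  obtain ⟨p, hp⟩ := List.getLast?_eq_some_iff.1 hi.2
  obtain ⟨q, hq⟩ := List.getLast?_eq_some_iff.1 hj.2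
  refine hS hi.1 hj.1 hij ?_
  simp only [hp, hq, List.dropLast_concat] at hsuf ⊢
  exact List.suffix_append_self_iff.2 hsuf

lemma filter_getLast?_union [DecidableEq ι] (hne : ∀ i ∈ S, ℓ i ≠ []) :
    S.filter (fun i => (ℓ i).getLast? = some true) ∪
      S.filter (fun i => (ℓ i).getLast? = some false) = S := by
  rw [← Finset.filter_or, Finset.filter_true_of_mem]
  intro i hi
  obtain ⟨d, hd⟩ := Option.ne_none_iff_exists'.1 (List.getLast?_eq_none_iff.not.2 (hne i hi))
  cases d <;> simp [hd]

lemma disjoint_filter_getLast? :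
    Disjoint (S.filter fun i => (ℓ i).getLast? = some true)
      (S.filter fun i => (ℓ i).getLast? = some false) :=
  Finset.disjoint_filter.2 fun _ _ h₁ h₂ => by simp [h₁] at h₂

lemma biInter_preimage_pathEval_eq (πL πR : H → H)
    (hne : ∀ i ∈ S, ℓ i ≠ []) (A : ι → Set H) :
    ⋂ i ∈ S, pathEval πL πR (ℓ i) ⁻¹' A i =
      πL ⁻¹' (⋂ i ∈ S.filter (fun i => (ℓ i).getLast? = some true),
        pathEval πL πR (ℓ i).dropLast ⁻¹' A i) ∩
      πR ⁻¹' (⋂ i ∈ S.filter (fun i => (ℓ i).getLast? = some false),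
        pathEval πL πR (ℓ i).dropLast ⁻¹' A i) := by
  ext σ
  simp only [Set.mem_inter_iff, Set.mem_preimage, Set.mem_iInter, Finset.mem_filter, and_imp]
  constructor
  · intro h
    exact ⟨fun i hi hd => pathEval_of_getLast?_eq_some πL πR hd σ ▸ h i hi,
      fun i hi hd => pathEval_of_getLast?_eq_some πL πR hd σ ▸ h i hi⟩
  · rintro ⟨hL, hR⟩ i hi
    obtain ⟨d, hd⟩ := Option.ne_none_iff_exists'.1 (List.getLast?_eq_none_iff.not.2 (hne i hi))
    rw [pathEval_of_getLast?_eq_some πL πR hd σ]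
    cases d
    · exact hR i hi hd
    · exact hL i hi hd

end SuffixFree

lemma FSF.NonDuplicating.nodup {φ : FSF} (hφ : φ.NonDuplicating) : φ.paths.Nodup :=
  hφ.imp fun {p q} h (hpq : p = q) => h.1 (hpq ▸ List.suffix_refl p)

lemma FSF.NonDuplicating.pairwise_not_suffix {φ : FSF} (hφ : φ.NonDuplicating) :
    Pairwise fun p q : {p | p ∈ φ.paths} => ¬ p.1 <:+ q.1 := by
  have : Std.Symm fun p q : List Bool => ¬ p <:+ q ∧ ¬ q <:+ p := ⟨fun _ _ h => h.symm⟩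
  exact fun p q hpq => (hφ.forall p.2 q.2 (Subtype.coe_ne_coe.2 hpq)).1

section Measure

variable [MeasurableSpace H] {μ : Measure H} {πL πR : H → H}

lemma measurePreserving_prodMk_of_lintegral [SFinite μ] (hπL : Measurable πL)
    (hπR : Measurable πR)
    (hsplit : ∀ g : H × H → ENNReal, Measurable g →
      ∫⁻ σ, g (πL σ, πR σ) ∂μ = ∫⁻ σ₁, ∫⁻ σ₂, g (σ₁, σ₂) ∂μ ∂μ) :
    MeasurePreserving (fun σ => (πL σ, πR σ)) μ (μ.prod μ) := by
  refine ⟨hπL.prodMk hπR, Measure.ext_of_lintegral _ fun g hg => ?_⟩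
  rw [lintegral_map hg (hπL.prodMk hπR), hsplit g hg, lintegral_prod _ hg.aemeasurable]

lemma measurePreserving_of_leftInverse {α β : Type*} [MeasurableSpace α] [MeasurableSpace β]
    {μa : Measure α} {μb : Measure β} {T : α → β} {S : β → α} (hT : MeasurePreserving T μa μb)
    (hS : Measurable S) (h : Function.LeftInverse S T) : MeasurePreserving S μb μa :=
  ⟨hS, by rw [← hT.map_eq, Measure.map_map hS hT.measurable, h.comp_eq_id, Measure.map_id]⟩

variable [IsProbabilityMeasure μ] (hT : MeasurePreserving (fun σ => (πL σ, πR σ)) μ (μ.prod μ))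
include hT

lemma measurePreserving_pathEval (p : List Bool) : MeasurePreserving (pathEval πL πR p) μ μ := by
  induction p with
  | nil => exact MeasurePreserving.id μ
  | cons d p ih =>
    cases d
    · exact ((measurePreserving_snd.comp hT).comp ih :)
    · exact ((measurePreserving_fst.comp hT).comp ih :)

lemma measure_preimage_inter_preimage {B C : Set H} (hB : MeasurableSet B)
    (hC : MeasurableSet C) : μ (πL ⁻¹' B ∩ πR ⁻¹' C) = μ B * μ C := by
  rw [← Measure.prod_prod]
  exact hT.measure_preimage (hB.prod hC).nullMeasurableSet

lemma measure_biInter_preimage_pathEval {ι : Type*} (ℓ : ι → List Bool) (S : Finset ι)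
    (hS : (S : Set ι).Pairwise (fun i j => ¬ ℓ i <:+ ℓ j)) (A : ι → Set H)
    (hA : ∀ i ∈ S, MeasurableSet (A i)) :
    μ (⋂ i ∈ S, pathEval πL πR (ℓ i) ⁻¹' A i) = ∏ i ∈ S, μ (A i) := by
  classical
  obtain ⟨n, hn⟩ : ∃ n, ∀ i ∈ S, (ℓ i).length ≤ n :=
    ⟨S.sup fun i => (ℓ i).length, fun i hi => Finset.le_sup (f := fun i => (ℓ i).length) hi⟩
  induction n using Nat.strong_induction_on generalizing ℓ S with
  | _ n ih =>
  rcases S.eq_empty_or_nonempty with rfl | ⟨i₀, hi₀⟩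
  · simp
  by_cases hnil : ∃ i ∈ S, ℓ i = []
  · obtain ⟨i, hi, hnil⟩ := hnil
    rw [eq_singleton_of_eq_nil hS hi hnil]
    simp [hnil, pathEval]
  push Not at hnil
  obtain ⟨m, rfl⟩ : ∃ m, n = m + 1 :=
    Nat.exists_eq_add_one.2 ((List.length_pos_iff.2 (hnil i₀ hi₀)).trans_le (hn i₀ hi₀))
  have hsub (d : Bool) := ih m m.lt_succ_self (fun i => (ℓ i).dropLast)
    (S.filter fun i => (ℓ i).getLast? = some d) (pairwise_dropLast_filter hS d)
    (fun i hi => hA i (Finset.mem_of_mem_filter i hi))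
    (fun i hi => by simpa using hn i (Finset.mem_of_mem_filter i hi))
  have hmeas (d : Bool) : MeasurableSet (⋂ i ∈ S.filter fun i => (ℓ i).getLast? = some d,
      pathEval πL πR (ℓ i).dropLast ⁻¹' A i) :=
    Finset.measurableSet_biInter _ fun i hi =>
      (measurePreserving_pathEval hT _).measurable (hA i (Finset.mem_of_mem_filter i hi))
  rw [biInter_preimage_pathEval_eq πL πR hnil, measure_preimage_inter_preimage hT (hmeas true)
    (hmeas false), hsub true, hsub false, ← Finset.prod_union disjoint_filter_getLast?,
    filter_getLast?_union hnil]

lemma iIndepFun_pathEval {ι : Type*} {ℓ : ι → List Bool}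
    (hℓ : Pairwise fun i j => ¬ ℓ i <:+ ℓ j) :
    iIndepFun (fun i => pathEval πL πR (ℓ i)) μ := by
  rw [iIndepFun_iff_measure_inter_preimage_eq_mul]
  intro S A hA
  rw [measure_biInter_preimage_pathEval hT ℓ S (hℓ.set_pairwise _) A hA]
  exact Finset.prod_congr rfl fun i hi =>
    ((measurePreserving_pathEval hT (ℓ i)).measure_preimage (hA i hi).nullMeasurableSet).symm

end Measure

section Tree

variable [MeasurableSpace H] {μ : Measure H} {πL πR : H → H} {c : H → H → H}
  {P : Set (List Bool)}

lemma measurable_eval_iSup_comap (hc : Measurable fun x : H × H => c x.1 x.2) (f : FSF) :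
    Measurable[⨆ p ∈ f.paths, ‹MeasurableSpace H›.comap (pathEval πL πR p)]
      (f.eval πL πR c) := by
  induction f with
  | path p =>
    exact (comap_measurable _).mono (le_iSup₂_of_le p (by simp [FSF.paths]) le_rfl) le_rfl
  | pair f g ihf ihg =>
    exact hc.comp ((ihf.mono (biSup_mono fun p => List.mem_append_left _) le_rfl).prodMk
      (ihg.mono (biSup_mono fun p => List.mem_append_right _) le_rfl))

lemma measurePreserving_eval [IsProbabilityMeasure μ]
    (hT : MeasurePreserving (fun σ => (πL σ, πR σ)) μ (μ.prod μ))
    (hc : MeasurePreserving (fun x : H × H => c x.1 x.2) (μ.prod μ) μ)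
    (hP : iIndepFun (fun p : P => pathEval πL πR p) μ) (f : FSF) (hnd : f.paths.Nodup)
    (hfP : ∀ p ∈ f.paths, p ∈ P) : MeasurePreserving (f.eval πL πR c) μ μ := by
  induction f with
  | path p => exact measurePreserving_pathEval hT p
  | pair f g ihf ihg =>
    obtain ⟨hndf, hndg, hdisj⟩ := List.nodup_append.1 hnd
    have hfP' : ∀ p ∈ f.paths, p ∈ P := fun p hp => hfP p (List.mem_append_left _ hp)
    have hgP' : ∀ p ∈ g.paths, p ∈ P := fun p hp => hfP p (List.mem_append_right _ hp)
    have hf := ihf hndf hfP'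
    have hg := ihg hndg hgP'
    have hindep : IndepFun (f.eval πL πR c) (g.eval πL πR c) μ := by
      have hsup := indep_iSup_of_disjoint
        (m := fun q : P => ‹MeasurableSpace H›.comap (pathEval πL πR q))
        (fun q => (measurePreserving_pathEval hT q).measurable.comap_le) hP.iIndep
        (S := {q : P | ↑q ∈ f.paths}) (T := {q : P | ↑q ∈ g.paths})
        (Set.disjoint_left.2 fun q hqf hqg => hdisj _ hqf _ hqg rfl)
      have hle (h : FSF) (hh : ∀ p ∈ h.paths, p ∈ P) :
          (⨆ p ∈ h.paths, ‹MeasurableSpace H›.comap (pathEval πL πR p)) ≤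
            ⨆ q ∈ {q : P | ↑q ∈ h.paths}, ‹MeasurableSpace H›.comap (pathEval πL πR q) :=
        iSup₂_le fun p hp => le_iSup₂_of_le (⟨p, hh p hp⟩ : P) hp le_rfl
      rw [IndepFun_iff_Indep]
      exact indep_of_indep_of_le hsup
        ((measurable_eval_iSup_comap hc.measurable f).comap_le.trans (hle f hfP'))
        ((measurable_eval_iSup_comap hc.measurable g).comap_le.trans (hle g hgP'))
    have hprod : MeasurePreserving (fun σ => (f.eval πL πR c σ, g.eval πL πR c σ)) μ
        (μ.prod μ) :=
      ⟨hf.measurable.prodMk hg.measurable, by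
        rw [(indepFun_iff_map_prod_eq_prod_map_map hf.measurable.aemeasurable
          hg.measurable.aemeasurable).1 hindep, hf.map_eq, hg.map_eq]⟩
    exact hc.comp hprod

end Tree

theorem nonduplicating_fsf_measure_preserving
    [MeasurableSpace H] (μ : Measure H) [IsProbabilityMeasure μ]
    (πL πR : H → H) (hπL : Measurable πL) (hπR : Measurable πR)
    (c : H → H → H) (hc : Measurable (fun x : H × H => c x.1 x.2))
    (hsurj : Function.Surjective (fun x : H × H => c x.1 x.2))
    (hcL : ∀ a b : H, πL (c a b) = a) (hcR : ∀ a b : H, πR (c a b) = b)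
    (hsplit : ∀ g : H × H → ENNReal, Measurable g →
      ∫⁻ σ, g (πL σ, πR σ) ∂μ = ∫⁻ σ₁, ∫⁻ σ₂, g (σ₁, σ₂) ∂μ ∂μ)
    (φ : FSF) (hφ : φ.NonDuplicating) :
    ∀ g : H → ENNReal, Measurable g →
      ∫⁻ σ, g (φ.eval πL πR c σ) ∂μ = ∫⁻ σ, g σ ∂μ := by
  intro g hg
  have hT := measurePreserving_prodMk_of_lintegral hπL hπR hsplit
  have hcT : MeasurePreserving (fun x : H × H => c x.1 x.2) (μ.prod μ) μ :=
    measurePreserving_of_leftInverse hT hc fun σ => by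
      obtain ⟨⟨a, b⟩, rfl⟩ := hsurj σ
      simp only [hcL, hcR]
  exact (measurePreserving_eval hT hcT (iIndepFun_pathEval hT hφ.pairwise_not_suffix) φ
    hφ.nodup fun _ => id).lintegral_comp hg

end EntropyShuffle
end

section
/- Let (H, μ) be a probability space with a measurable surjective pairing ⟨·,·⟩ : H × H → H and projections π_L, π_R satisfying π_L(σ₁⟨⟩σ₂) = σ₁, π_R(σ₁⟨⟩σ₂) = σ₂, such that the joint pushforward of μ under (π_L, π_R) is μ × μ. Then the map φ_c(σ) = π_L(π_R σ) ⟨⟩ (π_L σ ⟨⟩ π_R(π_R σ)) is measure-preserving for μ: for all measurable g : H → [0,∞], ∫ g(φ_c(σ)) dμ(σ) = ∫ g(σ) dμ(σ). -/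
open MeasureTheory

theorem commutativity_shuffle_measure_preserving
    {H : Type*} [MeasurableSpace H] (μ : Measure H) [IsProbabilityMeasure μ]
    (πL πR : H → H) (hπL : Measurable πL) (hπR : Measurable πR)
    (c : H → H → H) (hc : Measurable (fun x : H × H => c x.1 x.2))
    (hsurj : Function.Surjective (fun x : H × H => c x.1 x.2))
    (hcL : ∀ a b : H, πL (c a b) = a) (hcR : ∀ a b : H, πR (c a b) = b)
    (hsplit : ∀ g : H × H → ENNReal, Measurable g →
      ∫⁻ σ, g (πL σ, πR σ) ∂μ = ∫⁻ σ₁, ∫⁻ σ₂, g (σ₁, σ₂) ∂μ ∂μ) :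
    ∀ g : H → ENNReal, Measurable g →
      ∫⁻ σ, g (c (πL (πR σ)) (c (πL σ) (πR (πR σ)))) ∂μ = ∫⁻ σ, g σ ∂μ := by
  intro g hg
  have hcc : ∀ σ, c (πL σ) (πR σ) = σ := by
    intro σ
    obtain ⟨⟨x, y⟩, hx⟩ := hsurj σ
    simp only at hx
    rw [← hx, hcL, hcR]
  -- measurability helpers
  have m1 : Measurable (fun p : H × H => g (c (πL p.2) (c p.1 (πR p.2)))) := by
    apply hg.comp
    exact hc.comp ((hπL.comp measurable_snd).prodMk
      (hc.comp (measurable_fst.prodMk (hπR.comp measurable_snd))))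
  have m2 : ∀ a : H, Measurable (fun p : H × H => g (c p.1 (c a p.2))) := by
    intro a
    apply hg.comp
    exact hc.comp (measurable_fst.prodMk
      (hc.comp (measurable_const.prodMk measurable_snd)))
  have m3 : Measurable (fun p : H × H => g (c p.1 p.2)) := hg.comp hc
  have m4 : ∀ u : H, Measurable (fun p : H × H => g (c u (c p.1 p.2))) := by
    intro u
    apply hg.comp
    exact hc.comp (measurable_const.prodMk hc)
  have mtriple : Measurable (fun p : H × H => ∫⁻ v, g (c p.2 (c p.1 v)) ∂μ) := by
    apply Measurable.lintegral_prod_right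
    exact hg.comp (hc.comp ((measurable_snd.comp measurable_fst).prodMk
      (hc.comp ((measurable_fst.comp measurable_fst).prodMk measurable_snd))))
  -- LHS
  have h1 : ∫⁻ σ, g (c (πL (πR σ)) (c (πL σ) (πR (πR σ)))) ∂μ
      = ∫⁻ a, ∫⁻ b, g (c (πL b) (c a (πR b))) ∂μ ∂μ :=
    hsplit (fun p => g (c (πL p.2) (c p.1 (πR p.2)))) m1
  have h2 : ∀ a, ∫⁻ b, g (c (πL b) (c a (πR b))) ∂μ
      = ∫⁻ u, ∫⁻ v, g (c u (c a v)) ∂μ ∂μ := fun a =>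
    hsplit (fun p => g (c p.1 (c a p.2))) (m2 a)
  -- RHS
  have h3 : ∫⁻ σ, g σ ∂μ = ∫⁻ u, ∫⁻ w, g (c u w) ∂μ ∂μ := by
    have := hsplit (fun p => g (c p.1 p.2)) m3
    simpa [hcc] using this
  have h4 : ∀ u, ∫⁻ w, g (c u w) ∂μ = ∫⁻ a, ∫⁻ v, g (c u (c a v)) ∂μ ∂μ := by
    intro u
    have := hsplit (fun p => g (c u (c p.1 p.2))) (m4 u)
    simpa [hcc] using this
  rw [h1, h3]
  simp only [h2, h4]
  exact lintegral_lintegral_swap mtriple.aemeasurable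
end

section
/- Change of variables for inverse-CDF pushforward with density: if pdf : ℝ → [0,∞) is continuous with ∫ pdf dλ = 1, cdf(t) = ∫_{(-∞,t]} pdf dλ, and invcdf is measurable with invcdf(cdf(t)) = t for all t with pdf(t) > 0, then for any bounded measurable h : ℝ → [0,∞], ∫₀¹ h(invcdf(x)) dλ(x) = ∫_ℝ h(t) · pdf(t) dλ(t). -/
/-!
Let `ν` be the measure with density `pdf`; its distribution function is the given `cdf`.
Since `ν` has no atoms, `cdf` is continuous, so it pushes `ν` forward to Lebesgue measure on
`(0, 1)` (probability integral transform). Hence `∫₀¹ h ∘ invcdf = ∫ h (invcdf (cdf t)) dν(t)`,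
and `invcdf (cdf t) = t` for `ν`-almost every `t` because `ν` is carried by `{pdf > 0}`.
-/

open MeasureTheory Set

theorem IsClosed.eq_Iic_csSup {α : Type*} [ConditionallyCompleteLinearOrder α] [TopologicalSpace α]
    [OrderTopology α] {s : Set α} (hs : IsClosed s) (hs_lower : IsLowerSet s) (hne : s.Nonempty)
    (hbdd : BddAbove s) : s = Iic (sSup s) := by
  rw [← lowerClosure_eq_Iic_csSup hne hbdd hs, hs_lower.lowerClosure]

namespace ProbabilityTheory

variable {μ : Measure ℝ} [IsProbabilityMeasure μ] [NullSingletonClass μ]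

theorem continuous_cdf : Continuous (cdf μ) := by
  refine continuous_iff_continuousAt.2 fun x ↦ continuousAt_iff_continuous_left'_right'.2 ⟨?_, ?_⟩
  · rw [(monotone_cdf μ).continuousWithinAt_Iio_iff_leftLim_eq]
    have h := (cdf μ).measure_singleton x
    rw [measure_cdf, measure_singleton, eq_comm, ENNReal.ofReal_eq_zero, sub_nonpos] at h
    exact le_antisymm ((monotone_cdf μ).leftLim_le le_rfl) h
  · exact ((cdf μ).right_continuous x).mono Ioi_subset_Ici_self

theorem measure_cdf_preimage_Iic_of_mem_Ico {y : ℝ} (hy : y ∈ Ico 0 1) :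
    μ (cdf μ ⁻¹' Iic y) = ENNReal.ofReal y := by
  refine le_antisymm ?_ ?_
  · obtain hempty | hne := (cdf μ ⁻¹' Iic y).eq_empty_or_nonempty
    · simp [hempty]
    have hbdd : BddAbove (cdf μ ⁻¹' Iic y) := by
      obtain ⟨b, hb⟩ := ((tendsto_cdf_atTop μ).eventually (eventually_gt_nhds hy.2)).exists
      exact ⟨b, fun t ht ↦ ((monotone_cdf μ).reflect_lt (ht.trans_lt hb)).le⟩
    have hIic := (isClosed_Iic.preimage continuous_cdf).eq_Iic_csSup
      ((isLowerSet_Iic y).preimage (monotone_cdf μ)) hne hbdd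
    rw [hIic, ← ofReal_cdf]
    exact ENNReal.ofReal_le_ofReal (hIic.symm.subset self_mem_Iic)
  · obtain rfl | hy0 := hy.1.eq_or_lt
    · simp
    obtain ⟨s, rfl⟩ : y ∈ range (cdf μ) := mem_range_of_exists_le_of_exists_ge continuous_cdf
      (((tendsto_cdf_atBot μ).eventually (eventually_lt_nhds hy0)).exists.imp fun _ ↦ le_of_lt)
      (((tendsto_cdf_atTop μ).eventually (eventually_gt_nhds hy.2)).exists.imp fun _ ↦ le_of_lt)
    rw [ofReal_cdf]
    exact measure_mono fun t ht ↦ monotone_cdf μ ht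

theorem measure_cdf_preimage_Iic (y : ℝ) :
    μ (cdf μ ⁻¹' Iic y) = ENNReal.ofReal (min 1 y) := by
  rcases lt_or_ge y 0 with hy0 | hy0
  · have : cdf μ ⁻¹' Iic y = ∅ :=
      eq_empty_of_forall_notMem fun t ht ↦ (hy0.trans_le (cdf_nonneg μ t)).not_ge ht
    simp [this, min_eq_right (hy0.le.trans zero_le_one), ENNReal.ofReal_of_nonpos hy0.le]
  rcases lt_or_ge y 1 with hy1 | hy1
  · rw [min_eq_right hy1.le, measure_cdf_preimage_Iic_of_mem_Ico ⟨hy0, hy1⟩]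
  · have : cdf μ ⁻¹' Iic y = univ :=
      eq_univ_of_forall fun t ↦ (cdf_le_one μ t).trans hy1
    simp [this, min_eq_left hy1]

theorem map_cdf : μ.map (cdf μ) = volume.restrict (Ioo 0 1) := by
  have : IsFiniteMeasure (volume.restrict (Ioo (0 : ℝ) 1)) := ⟨by simp⟩
  refine Measure.ext_of_Iic _ _ fun y ↦ ?_
  rw [Measure.map_apply continuous_cdf.measurable measurableSet_Iic, measure_cdf_preimage_Iic,
    Measure.restrict_congr_set Ioo_ae_eq_Ioc, Measure.restrict_apply measurableSet_Iic, inter_comm,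
    Ioc_inter_Iic, Real.volume_Ioc, sub_zero]

theorem lintegral_comp_cdf {g : ℝ → ENNReal} (hg : Measurable g) :
    ∫⁻ t, g (cdf μ t) ∂μ = ∫⁻ x in Ioo 0 1, g x := by
  rw [← map_cdf (μ := μ), lintegral_map hg continuous_cdf.measurable]

theorem cdf_withDensity_ofReal {ρ : Measure ℝ} {f : ℝ → ℝ} (hf : AEStronglyMeasurable f ρ)
    (hf_nonneg : ∀ t, 0 ≤ f t) [IsProbabilityMeasure (ρ.withDensity fun t ↦ ENNReal.ofReal (f t))]
    (t : ℝ) : cdf (ρ.withDensity fun t ↦ ENNReal.ofReal (f t)) t = ∫ x in Iic t, f x ∂ρ := by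
  rw [cdf_eq_real, measureReal_def, withDensity_apply _ measurableSet_Iic,
    integral_eq_lintegral_of_nonneg_ae (ae_of_all _ hf_nonneg) hf.restrict]

end ProbabilityTheory

theorem invcdf_change_of_variables_general
    (pdf : ℝ → ℝ) (hpdf_cont : Continuous pdf) (hpdf_nonneg : ∀ t, 0 ≤ pdf t)
    (hpdf_int : ∫⁻ t, ENNReal.ofReal (pdf t) ∂volume = 1)
    (cdf : ℝ → ℝ) (hcdf : ∀ t, cdf t = ∫ x in Set.Iic t, pdf x ∂volume)
    (invcdf : ℝ → ℝ) (hinvcdf_meas : Measurable invcdf)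
    (hinv : ∀ t, 0 < pdf t → invcdf (cdf t) = t)
    (h : ℝ → ENNReal) (hh : Measurable h) :
    ∫⁻ x in Set.Ioo (0:ℝ) 1, h (invcdf x) ∂volume
      = ∫⁻ t, h t * ENNReal.ofReal (pdf t) ∂volume := by
  have hdens : Measurable fun t ↦ ENNReal.ofReal (pdf t) := hpdf_cont.measurable.ennreal_ofReal
  set ν := volume.withDensity fun t ↦ ENNReal.ofReal (pdf t)
  have : IsProbabilityMeasure ν :=
    ⟨by rw [withDensity_apply _ .univ, Measure.restrict_univ, hpdf_int]⟩
  have hcdf_eq : ∀ t, ProbabilityTheory.cdf ν t = cdf t := fun t ↦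
    (ProbabilityTheory.cdf_withDensity_ofReal hpdf_cont.aestronglyMeasurable hpdf_nonneg t).trans
      (hcdf t).symm
  have hinv_ae : ∀ᵐ t ∂ν, invcdf (ProbabilityTheory.cdf ν t) = t :=
    (ae_withDensity_iff hdens).2 <| ae_of_all _ fun t ht ↦ by
      rw [hcdf_eq, hinv t (ENNReal.ofReal_pos.1 (pos_iff_ne_zero.2 ht))]
  calc ∫⁻ x in Set.Ioo (0:ℝ) 1, h (invcdf x) ∂volume
      = ∫⁻ t, h (invcdf (ProbabilityTheory.cdf ν t)) ∂ν :=
        (ProbabilityTheory.lintegral_comp_cdf (hh.comp hinvcdf_meas)).symm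
    _ = ∫⁻ t, h t ∂ν := lintegral_congr_ae (hinv_ae.mono fun t ht ↦ congrArg h ht)
    _ = ∫⁻ t, h t * ENNReal.ofReal (pdf t) ∂volume := by
      rw [lintegral_withDensity_eq_lintegral_mul _ hdens hh]
      simp only [Pi.mul_apply, mul_comm]

theorem invcdf_change_of_variables
    (pdf : ℝ → ℝ) (hpdf_cont : Continuous pdf) (hpdf_nonneg : ∀ t, 0 ≤ pdf t)
    (hpdf_int : ∫⁻ t, ENNReal.ofReal (pdf t) ∂volume = 1)
    (cdf : ℝ → ℝ) (hcdf : ∀ t, cdf t = ∫ x in Set.Iic t, pdf x ∂volume)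
    (invcdf : ℝ → ℝ) (hinvcdf_meas : Measurable invcdf)
    (hinv : ∀ t, 0 < pdf t → invcdf (cdf t) = t)
    (h : ℝ → ENNReal) (hh : Measurable h)
    (C : ENNReal) (hC : C ≠ ⊤) (hbdd : ∀ t, h t ≤ C) :
    ∫⁻ x in Set.Ioo (0:ℝ) 1, h (invcdf x) ∂volume
      = ∫⁻ t, h t * ENNReal.ofReal (pdf t) ∂volume :=
  invcdf_change_of_variables_general pdf hpdf_cont hpdf_nonneg hpdf_int cdf hcdf invcdf hinvcdf_meas
    hinv h hh
end

section
/- Iterated independence from a splitting structure: let (H, μ) be a probability space with π_L, π_R : H → H such that (π_L, π_R) pushes μ forward to μ × μ, and let π_U : H → ℝ push μ forward to the uniform distribution on [0,1]. Define Xₙ : H → ℝ by Xₙ(σ) = π_U(π_L(π_Rⁿ(σ))) (where π_Rⁿ is the n-fold composite of π_R). Then (Xₙ)_{n∈ℕ} is an i.i.d. sequence of uniform [0,1] random variables: for every k and Borel sets A₀,...,A_{k} ⊆ ℝ, μ(⋂_{i=0}^{k} Xᵢ⁻¹(Aᵢ)) = ∏_{i=0}^{k} λ(Aᵢ ∩ [0,1]).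 -/
open MeasureTheory

theorem splitting_iid_uniforms
    {H : Type*} [MeasurableSpace H] (μ : Measure H) [IsProbabilityMeasure μ]
    (πL πR : H → H) (hπL : Measurable πL) (hπR : Measurable πR)
    (πU : H → ℝ) (hπU : Measurable πU)
    (hsplit : ∀ g : H × H → ENNReal, Measurable g →
      ∫⁻ σ, g (πL σ, πR σ) ∂μ = ∫⁻ σ₁, ∫⁻ σ₂, g (σ₁, σ₂) ∂μ ∂μ)
    (huni : ∀ f : ℝ → ENNReal, Measurable f →
      ∫⁻ σ, f (πU σ) ∂μ = ∫⁻ x in Set.Icc (0:ℝ) 1, f x ∂volume)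
    (X : ℕ → H → ℝ) (hX : ∀ n σ, X n σ = πU (πL (πR^[n] σ))) :
    ∀ (k : ℕ) (A : Fin (k + 1) → Set ℝ), (∀ i, MeasurableSet (A i)) →
      μ (⋂ i : Fin (k + 1), X (i : ℕ) ⁻¹' A i)
        = ∏ i : Fin (k + 1), volume (A i ∩ Set.Icc (0:ℝ) 1) := by
  have hXm : ∀ n, Measurable (X n) := by
    intro n
    have : X n = fun σ => πU (πL (πR^[n] σ)) := funext (hX n)
    rw [this]
    exact hπU.comp (hπL.comp (hπR.iterate n))
  have hkey : ∀ B C : Set H, MeasurableSet B → MeasurableSet C →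
      μ (πL ⁻¹' B ∩ πR ⁻¹' C) = μ B * μ C := by
    intro B C hB hC
    have hg : Measurable ((B ×ˢ C).indicator (1 : H × H → ENNReal)) :=
      measurable_one.indicator (hB.prod hC)
    have h := hsplit _ hg
    have hL : (fun σ => (B ×ˢ C).indicator (1 : H × H → ENNReal) (πL σ, πR σ))
        = (πL ⁻¹' B ∩ πR ⁻¹' C).indicator 1 := by
      funext σ
      by_cases h1 : πL σ ∈ B <;> by_cases h2 : πR σ ∈ C <;>
        simp [Set.indicator_apply, h1, h2]
    have hprod : ∀ σ₁ σ₂, (B ×ˢ C).indicator (1 : H × H → ENNReal) (σ₁, σ₂)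
        = B.indicator 1 σ₁ * C.indicator 1 σ₂ := by
      intro σ₁ σ₂
      by_cases h1 : σ₁ ∈ B <;> by_cases h2 : σ₂ ∈ C <;>
        simp [Set.indicator_apply, h1, h2]
    rw [hL, lintegral_indicator_one ((hπL hB).inter (hπR hC))] at h
    rw [h]
    have : ∀ σ₁, ∫⁻ σ₂, (B ×ˢ C).indicator (1 : H × H → ENNReal) (σ₁, σ₂) ∂μ
        = B.indicator 1 σ₁ * μ C := by
      intro σ₁
      simp only [hprod]
      rw [lintegral_const_mul _ (measurable_one.indicator hC),
        lintegral_indicator_one hC]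
    simp only [this]
    rw [lintegral_mul_const _ (measurable_one.indicator hB),
      lintegral_indicator_one hB]
  have hU : ∀ A : Set ℝ, MeasurableSet A →
      μ (πU ⁻¹' A) = volume (A ∩ Set.Icc (0:ℝ) 1) := by
    intro A hA
    have h := huni (A.indicator 1) (measurable_one.indicator hA)
    have hL : (fun σ => A.indicator (1 : ℝ → ENNReal) (πU σ))
        = (πU ⁻¹' A).indicator 1 := by
      funext σ; by_cases h1 : πU σ ∈ A <;> simp [Set.indicator_apply, h1]
    rw [hL, lintegral_indicator_one (hπU hA)] at h
    rw [h, lintegral_indicator_one hA, Measure.restrict_apply hA]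
  have hmu : ∀ A : Set ℝ, MeasurableSet A →
      μ (πL ⁻¹' (πU ⁻¹' A)) = volume (A ∩ Set.Icc (0:ℝ) 1) := by
    intro A hA
    have h := hkey (πU ⁻¹' A) Set.univ (hπU hA) MeasurableSet.univ
    simp only [Set.preimage_univ, Set.inter_univ, measure_univ, mul_one] at h
    rw [h, hU A hA]
  have hXR : ∀ n σ, X (n + 1) σ = X n (πR σ) := by
    intro n σ
    rw [hX, hX, Function.iterate_succ_apply]
  intro k
  induction k with
  | zero =>
    intro A hA
    have hset : (⋂ i : Fin 1, X (i : ℕ) ⁻¹' A i) = πL ⁻¹' (πU ⁻¹' A 0) := by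
      ext σ
      simp only [Set.mem_iInter, Set.mem_preimage, Fin.forall_fin_one]
      rw [hX]
      simp
    rw [hset, hmu _ (hA 0)]
    simp
  | succ k ih =>
    intro A hA
    have hset : (⋂ i : Fin (k + 2), X (i : ℕ) ⁻¹' A i)
        = πL ⁻¹' (πU ⁻¹' A 0) ∩
          πR ⁻¹' (⋂ j : Fin (k + 1), X (j : ℕ) ⁻¹' A j.succ) := by
      ext σ
      simp only [Set.mem_iInter, Set.mem_inter_iff, Set.mem_preimage]
      constructor
      · intro h
        refine ⟨?_, fun j => ?_⟩
        · have := h 0; rw [hX] at this; simpa using this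
        · have := h j.succ; rwa [Fin.val_succ, hXR] at this
      · intro h i
        refine Fin.cases ?_ (fun j => ?_) i
        · rw [hX]; simpa using h.1
        · rw [Fin.val_succ, hXR]; exact h.2 j
    have hmeas : MeasurableSet (⋂ j : Fin (k + 1), X (j : ℕ) ⁻¹' A j.succ) :=
      MeasurableSet.iInter fun j => hXm _ (hA j.succ)
    rw [hset, hkey _ _ (hπU (hA 0)) hmeas, hU _ (hA 0),
      ih (fun j => A j.succ) (fun j => hA j.succ)]
    exact (Fin.prod_univ_succ fun i => volume (A i ∩ Set.Icc (0:ℝ) 1)).symm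
end
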